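/- For every k ≥ 1, the class of languages of deterministic k-VASS with reachability acceptance is strictly contained in that of history-deterministic k-VASS with reachability acceptance, which is strictly contained in that of nondeterministic k-VASS with reachability acceptance. -/

import Mathlib

open scoped Classical

/-- A `k`-dimensional vector addition system with states over alphabet `A`.
States are `Fin n`; transitions are labelled by a letter and an effect in `ℤ^k`. -/
structure VASS (k : ℕ) (A : Type) where
  n : ℕ
  trans : Set (Fin n × A × (Fin k → ℤ) × Fin n)
  init : Fin n
  acc : Set (Fin n)

namespace VASS

variable {k : ℕ} {A : Type}

/-- A configuration: a state together with counters in `ℕ^k`. -/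
abbrev Conf (V : VASS k A) := Fin V.n × (Fin k → ℕ)

/-- `Run V c w c'`: there is a valid run of `V` from configuration `c` to `c'`
reading the word `w`, with counters staying nonnegative throughout. -/
inductive Run (V : VASS k A) : V.Conf → List A → V.Conf → Prop
  | nil (c : V.Conf) : Run V c [] c
  | cons {q : Fin V.n} {v : Fin k → ℕ} {a : A} {d : Fin k → ℤ} {q' : Fin V.n}
      {w : List A} {c' : V.Conf} :
      (q, a, d, q') ∈ V.trans →
      (∀ i, 0 ≤ (v i : ℤ) + d i) →
      Run V (q', fun i => ((v i : ℤ) + d i).toNat) w c' →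
      Run V (q, v) (a :: w) c'

/-- The initial configuration: initial state with all counters zero. -/
def initConf (V : VASS k A) : V.Conf := (V.init, fun _ => 0)

/-- Coverability acceptance: some run ends in an accepting state. -/
def LangCover (V : VASS k A) : Set (List A) :=
  {w | ∃ c, V.Run V.initConf w c ∧ c.1 ∈ V.acc}

/-- Reachability acceptance: some run ends in an accepting state with all counters zero. -/
def LangReach (V : VASS k A) : Set (List A) :=
  {w | ∃ c, V.Run V.initConf w c ∧ c.1 ∈ V.acc ∧ c.2 = fun _ => 0}

/-- Deterministic: at most one outgoing transition per state and letter. -/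
def Det (V : VASS k A) : Prop :=
  ∀ q a d₁ q₁ d₂ q₂, (q, a, d₁, q₁) ∈ V.trans → (q, a, d₂, q₂) ∈ V.trans →
    d₁ = d₂ ∧ q₁ = q₂

/-- A resolver: given the history (the word read so far) and the next letter,
choose the effect and target state of the transition to take. -/
def Resolver (V : VASS k A) := List A → A → (Fin k → ℤ) × Fin V.n

/-- One step of the run built by a resolver (carrying the prefix read so far). -/
noncomputable def resStep (V : VASS k A) (r : V.Resolver) :
    (List A × Option V.Conf) → A → (List A × Option V.Conf) :=
  fun p a =>
    (p.1 ++ [a],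
      p.2.bind fun c =>
        let t := r p.1 a
        if (c.1, a, t.1, t.2) ∈ V.trans ∧ ∀ i, 0 ≤ ((c.2 i : ℤ) + t.1 i) then
          some (t.2, fun i => ((c.2 i : ℤ) + t.1 i).toNat)
        else none)

/-- The configuration reached by following the resolver on `w` (if the run survives). -/
noncomputable def resRun (V : VASS k A) (r : V.Resolver) (w : List A) : Option V.Conf :=
  (w.foldl (V.resStep r) ([], some V.initConf)).2

/-- History-determinism for coverability acceptance:
some resolver's run accepts every word of the language. -/
def HDCover (V : VASS k A) : Prop :=
  ∃ r : V.Resolver, ∀ w ∈ V.LangCover,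
    ∃ c, V.resRun r w = some c ∧ c.1 ∈ V.acc

/-- History-determinism for reachability acceptance. -/
def HDReach (V : VASS k A) : Prop :=
  ∃ r : V.Resolver, ∀ w ∈ V.LangReach,
    ∃ c, V.resRun r w = some c ∧ c.1 ∈ V.acc ∧ c.2 = fun _ => 0

/-- Coverability language of a VASS with ε-transitions (letter `none` is silent):
the input word is the sequence of actual letters read. -/
def LangCoverE (V : VASS k (Option A)) : Set (List A) :=
  {w | ∃ u c, V.Run V.initConf u c ∧ u.reduceOption = w ∧ c.1 ∈ V.acc}

/-- Reachability language of a VASS with ε-transitions. -/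
def LangReachE (V : VASS k (Option A)) : Set (List A) :=
  {w | ∃ u c, V.Run V.initConf u c ∧ u.reduceOption = w ∧ c.1 ∈ V.acc ∧ c.2 = fun _ => 0}

/-- History-determinism with ε-transitions, coverability: a resolver together with a
(prefix-monotone) scheduling of silent moves accepts every word of the language. -/
def HDCoverE (V : VASS k (Option A)) : Prop :=
  ∃ (r : V.Resolver) (f : List A → List (Option A)),
    (∀ u w, u <+: w → f u <+: f w) ∧
    ∀ w ∈ V.LangCoverE, (f w).reduceOption = w ∧
      ∃ c, V.resRun r (f w) = some c ∧ c.1 ∈ V.acc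

/-- History-determinism with ε-transitions, reachability. -/
def HDReachE (V : VASS k (Option A)) : Prop :=
  ∃ (r : V.Resolver) (f : List A → List (Option A)),
    (∀ u w, u <+: w → f u <+: f w) ∧
    ∀ w ∈ V.LangReachE, (f w).reduceOption = w ∧
      ∃ c, V.resRun r (f w) = some c ∧ c.1 ∈ V.acc ∧ c.2 = fun _ => 0

end VASS

inductive ABC | a | b | c
deriving DecidableEq

/-- Languages of deterministic `k`-VASS under reachability acceptance. -/
def DetR (k : ℕ) : Set (Set (List ABC)) :=
  {L | ∃ V : VASS k ABC, V.Det ∧ V.LangReach = L}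

/-- Languages of history-deterministic `k`-VASS under reachability acceptance. -/
def HDR (k : ℕ) : Set (Set (List ABC)) :=
  {L | ∃ V : VASS k ABC, V.HDReach ∧ V.LangReach = L}

/-- Languages of nondeterministic `k`-VASS under reachability acceptance. -/
def NR (k : ℕ) : Set (Set (List ABC)) :=
  {L | ∃ V : VASS k ABC, V.LangReach = L}


namespace VASS

variable {k : ℕ} {A : Type} {V : VASS k A}

theorem Run.append {c c' c'' : V.Conf} {w₁ w₂ : List A}
    (h1 : V.Run c w₁ c') (h2 : V.Run c' w₂ c'') : V.Run c (w₁ ++ w₂) c'' := by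
  induction h1 with
  | nil => simpa
  | cons ht hn _ ih => exact .cons ht hn (ih h2)

theorem Run.split {c c'' : V.Conf} {w₁ w₂ : List A}
    (h : V.Run c (w₁ ++ w₂) c'') : ∃ c', V.Run c w₁ c' ∧ V.Run c' w₂ c'' := by
  induction w₁ generalizing c with
  | nil => exact ⟨c, .nil c, h⟩
  | cons a w ih =>
    cases h with
    | cons ht hn h' =>
      obtain ⟨c', h1, h2⟩ := ih h'
      exact ⟨c', .cons ht hn h1, h2⟩

theorem run_unique (hdet : V.Det) {c c₁ c₂ : V.Conf} {w : List A}
    (h1 : V.Run c w c₁) (h2 : V.Run c w c₂) : c₁ = c₂ := by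
  induction w generalizing c with
  | nil => cases h1; cases h2; rfl
  | cons a w ih =>
    cases h1 with
    | cons ht1 hn1 h1' =>
      cases h2 with
      | cons ht2 hn2 h2' =>
        obtain ⟨hd, hq⟩ := hdet _ _ _ _ _ _ ht1 ht2
        subst hd; subst hq
        exact ih h1' h2'

theorem Run.shift {c c' : V.Conf} {w : List A} (t : Fin k → ℕ) (h : V.Run c w c') :
    V.Run (c.1, fun i => c.2 i + t i) w (c'.1, fun i => c'.2 i + t i) := by
  induction h with
  | nil c => exact .nil _
  | @cons q v a d q' w c' ht hn h ih =>
    refine .cons (q := q) (v := fun i => v i + t i) ht (fun i => ?_) ?_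
    · have := hn i; push_cast; omega
    · have e : (fun i => (((v i + t i : ℕ) : ℤ) + d i).toNat)
          = fun i => (((v i : ℤ) + d i).toNat) + t i := by
        funext i; have := hn i; push_cast; omega
      rw [e]; exact ih

theorem foldl_resStep_fst (r : V.Resolver) :
    ∀ (w : List A) (z : List A × Option V.Conf),
      (w.foldl (V.resStep r) z).1 = z.1 ++ w := by
  intro w
  induction w with
  | nil => simp
  | cons a w ih =>
    intro z
    rw [List.foldl_cons, ih]
    simp [resStep]

theorem foldl_resStep_none (r : V.Resolver) :
    ∀ (w : List A) (p : List A), (w.foldl (V.resStep r) (p, none)).2 = none := by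
  intro w
  induction w with
  | nil => simp
  | cons a w ih =>
    intro p
    rw [List.foldl_cons]
    exact ih (p ++ [a])

theorem foldl_resStep_run (r : V.Resolver) :
    ∀ (w : List A) (p : List A) (c c' : V.Conf),
      (w.foldl (V.resStep r) (p, some c)).2 = some c' → V.Run c w c' := by
  intro w
  induction w with
  | nil =>
    intro p c c' h
    simp only [List.foldl_nil] at h
    cases h; exact .nil _
  | cons a w ih =>
    rintro p ⟨q, v⟩ c' h
    rw [List.foldl_cons] at h
    by_cases hc : ((q, a, (r p a).1, (r p a).2) ∈ V.trans ∧ ∀ i, 0 ≤ ((v i : ℤ) + (r p a).1 i))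
    · have e : V.resStep r (p, some (q, v)) a
          = (p ++ [a], some ((r p a).2, fun i => ((v i : ℤ) + (r p a).1 i).toNat)) := by
        simp only [resStep, Option.bind_some]
        rw [if_pos hc]
      rw [e] at h
      exact Run.cons hc.1 hc.2 (ih _ _ _ h)
    · have e : V.resStep r (p, some (q, v)) a = (p ++ [a], none) := by
        simp only [resStep, Option.bind_some]
        rw [if_neg hc]
      rw [e] at h
      rw [foldl_resStep_none] at h
      cases h

theorem resRun_run (r : V.Resolver) {w : List A} {c : V.Conf}
    (h : V.resRun r w = some c) : V.Run V.initConf w c :=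
  foldl_resStep_run r w [] _ _ h

theorem resRun_append (r : V.Resolver) {u : List A} {c : V.Conf}
    (h : V.resRun r u = some c) (w : List A) :
    V.resRun r (u ++ w) = (w.foldl (V.resStep r) (u, some c)).2 := by
  unfold resRun at *
  rw [List.foldl_append]
  have h1 := foldl_resStep_fst r u ([], some V.initConf)
  simp only [List.nil_append] at h1
  have e : u.foldl (V.resStep r) ([], some V.initConf) = (u, some c) := Prod.ext h1 h
  rw [e]

theorem resRun_segment (r : V.Resolver) {u w : List A} {c c' : V.Conf}
    (hu : V.resRun r u = some c) (h : V.resRun r (u ++ w) = some c') : V.Run c w c' := by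
  rw [resRun_append r hu w] at h
  exact foldl_resStep_run r w u c c' h

theorem resRun_prefix_some (r : V.Resolver) {u w : List A} {c' : V.Conf}
    (h : V.resRun r (u ++ w) = some c') : ∃ c, V.resRun r u = some c := by
  cases hu : V.resRun r u with
  | some c => exact ⟨c, rfl⟩
  | none =>
    exfalso
    have h1 := foldl_resStep_fst r u ([], some V.initConf)
    simp only [List.nil_append] at h1
    have e : u.foldl (V.resStep r) ([], some V.initConf) = (u, none) := Prod.ext h1 hu
    unfold resRun at h
    rw [List.foldl_append, e, foldl_resStep_none] at h
    cases h

noncomputable def detRes (V : VASS k A) : V.Resolver := fun u a =>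
  if h : ∃ t : (Fin k → ℤ) × Fin V.n, ∃ c : V.Conf,
      V.Run V.initConf u c ∧ (c.1, a, t.1, t.2) ∈ V.trans then h.choose
  else (fun _ => 0, V.init)

theorem det_foldl (hdet : V.Det) :
    ∀ (w u : List A) (c c' : V.Conf), V.Run V.initConf u c → V.Run c w c' →
      w.foldl (V.resStep (detRes V)) (u, some c) = (u ++ w, some c') := by
  intro w
  induction w with
  | nil =>
    intro u c c' h1 h2
    cases h2; simp
  | cons a w ih =>
    intro u c c' h1 h2
    cases h2 with
    | @cons q v _ d q' _ _ ht hn h2' =>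
      have hex : ∃ t : (Fin k → ℤ) × Fin V.n, ∃ c0 : V.Conf,
          V.Run V.initConf u c0 ∧ (c0.1, a, t.1, t.2) ∈ V.trans := ⟨(d, q'), (q, v), h1, ht⟩
      have hchoose : detRes V u a = hex.choose := dif_pos hex
      obtain ⟨c0, hc0run, hc0t⟩ := hex.choose_spec
      have hc0 : c0 = (q, v) := run_unique hdet hc0run h1
      rw [hc0] at hc0t
      obtain ⟨hd, hq⟩ := hdet _ _ _ _ _ _ hc0t ht
      have htr1 : (detRes V u a).1 = d := by rw [hchoose, hd]
      have htr2 : (detRes V u a).2 = q' := by rw [hchoose, hq]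
      have hmem : (q, a, (detRes V u a).1, (detRes V u a).2) ∈ V.trans := by
        rw [htr1, htr2]; exact ht
      have hn' : ∀ i, 0 ≤ (v i : ℤ) + (detRes V u a).1 i := by
        rw [htr1]; exact hn
      have e : V.resStep (detRes V) (u, some (q, v)) a
          = (u ++ [a], some (q', fun i => ((v i : ℤ) + d i).toNat)) := by
        simp only [resStep, Option.bind_some]
        rw [if_pos ⟨hmem, hn'⟩]
        simp only [htr1, htr2]
      rw [List.foldl_cons, e,
        ih (u ++ [a]) _ c' (h1.append (Run.cons ht hn (Run.nil _))) h2']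
      simp

theorem det_hdReach (hdet : V.Det) : V.HDReach := by
  refine ⟨detRes V, fun w hw => ?_⟩
  obtain ⟨c, hrun, hacc, h0⟩ := hw
  refine ⟨c, ?_, hacc, h0⟩
  unfold resRun
  rw [det_foldl hdet w [] _ _ (Run.nil _) hrun]

end VASS

open ABC in
/-- The HD witness: accepts `a^n b^m` with `n ≤ m`. -/
@[reducible] def V1 (k : ℕ) : VASS k ABC where
  n := 2
  trans := {((0:Fin 2), a, fun _ => (1:ℤ), (0:Fin 2)),
            ((0:Fin 2), b, fun _ => (-1:ℤ), (1:Fin 2)),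
            ((0:Fin 2), b, fun _ => (0:ℤ), (1:Fin 2)),
            ((1:Fin 2), b, fun _ => (-1:ℤ), (1:Fin 2)),
            ((1:Fin 2), b, fun _ => (0:ℤ), (1:Fin 2))}
  init := 0
  acc := Set.univ

open ABC in
/-- The nondeterministic witness: accepts `a^n b^m` with `m ≤ n`. -/
@[reducible] def V2 (k : ℕ) : VASS k ABC where
  n := 2
  trans := {((0:Fin 2), a, fun _ => (1:ℤ), (0:Fin 2)),
            ((0:Fin 2), a, fun _ => (0:ℤ), (0:Fin 2)),
            ((0:Fin 2), b, fun _ => (-1:ℤ), (1:Fin 2)),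
            ((1:Fin 2), b, fun _ => (-1:ℤ), (1:Fin 2))}
  init := 0
  acc := Set.univ

def wa (n m : ℕ) : List ABC := List.replicate n ABC.a ++ List.replicate m ABC.b

def La : Set (List ABC) := {w | ∃ n m, n ≤ m ∧ w = wa n m}

def Lb : Set (List ABC) := {w | ∃ n m, m ≤ n ∧ w = wa n m}

lemma wa_count_a (n m : ℕ) : (wa n m).count ABC.a = n := by
  simp [wa, List.count_append, List.count_replicate]

lemma wa_count_b (n m : ℕ) : (wa n m).count ABC.b = m := by
  simp [wa, List.count_append, List.count_replicate]

lemma wa_eq {n m n' m' : ℕ} (h : wa n m = wa n' m') : n = n' ∧ m = m' := by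
  constructor
  · have := congrArg (List.count ABC.a) h
    rwa [wa_count_a, wa_count_a] at this
  · have := congrArg (List.count ABC.b) h
    rwa [wa_count_b, wa_count_b] at this

lemma mem_La {n m : ℕ} : wa n m ∈ La ↔ n ≤ m := by
  constructor
  · rintro ⟨n', m', h, he⟩
    obtain ⟨rfl, rfl⟩ := wa_eq he
    exact h
  · intro h; exact ⟨n, m, h, rfl⟩

lemma mem_Lb {n m : ℕ} : wa n m ∈ Lb ↔ m ≤ n := by
  constructor
  · rintro ⟨n', m', h, he⟩
    obtain ⟨rfl, rfl⟩ := wa_eq he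
    exact h
  · intro h; exact ⟨n, m, h, rfl⟩

section Vone

variable {k : ℕ}

lemma v1_run1 (hk : 0 < k) : ∀ (w : List ABC) (x : ℕ) (q' : Fin 2) (v' : Fin k → ℕ),
    (V1 k).Run (1, fun _ => x) w (q', v') →
    ∃ m y, w = List.replicate m ABC.b ∧ q' = 1 ∧ v' = (fun _ => y) ∧ y ≤ x ∧ x ≤ y + m := by
  intro w
  induction w with
  | nil =>
    intro x q' v' h
    cases h
    exact ⟨0, x, rfl, rfl, rfl, le_refl _, by omega⟩
  | cons ch w ih =>
    intro x q' v' h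
    cases h with
    | @cons _ _ _ d q₂ _ _ ht hn h' =>
      simp only [V1, Set.mem_insert_iff, Set.mem_singleton_iff, Prod.mk.injEq] at ht
      rcases ht with ⟨h01, -⟩ | ⟨h01, -⟩ | ⟨h01, -⟩ | ⟨-, hch, hd, hq⟩ | ⟨-, hch, hd, hq⟩
      · exact absurd h01 (by decide : ¬((1:Fin 2) = 0))
      · exact absurd h01 (by decide : ¬((1:Fin 2) = 0))
      · exact absurd h01 (by decide : ¬((1:Fin 2) = 0))
      · -- decrement
        subst hch; subst hd; subst hq
        have hx : 1 ≤ x := by have := hn ⟨0, hk⟩; simp at this; omega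
        have e : (fun i : Fin k => ((x : ℤ) + (fun _ : Fin k => (-1:ℤ)) i).toNat)
            = (fun _ : Fin k => x - 1) := by funext i; simp; try omega
        rw [e] at h'
        obtain ⟨m, y, hw, hq', hv', h1, h2⟩ := ih (x - 1) q' v' h'
        exact ⟨m + 1, y, by rw [hw, List.replicate_succ], hq', hv', by omega, by omega⟩
      · -- zero effect
        subst hch; subst hd; subst hq
        have e : (fun i : Fin k => ((x : ℤ) + (fun _ : Fin k => (0:ℤ)) i).toNat)
            = (fun _ : Fin k => x) := by funext i; simp
        rw [e] at h'
        obtain ⟨m, y, hw, hq', hv', h1, h2⟩ := ih x q' v' h'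
        exact ⟨m + 1, y, by rw [hw, List.replicate_succ], hq', hv', by omega, by omega⟩

lemma v1_run0 (hk : 0 < k) : ∀ (w : List ABC) (x : ℕ) (q' : Fin 2) (v' : Fin k → ℕ),
    (V1 k).Run (0, fun _ => x) w (q', v') →
    ∃ n m y, w = wa n m ∧ v' = (fun _ => y) ∧ y ≤ x + n ∧ x + n ≤ y + m := by
  intro w
  induction w with
  | nil =>
    intro x q' v' h
    cases h
    exact ⟨0, 0, x, rfl, rfl, by omega, by omega⟩
  | cons ch w ih =>
    intro x q' v' h
    cases h with
    | @cons _ _ _ d q₂ _ _ ht hn h' =>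
      simp only [V1, Set.mem_insert_iff, Set.mem_singleton_iff, Prod.mk.injEq] at ht
      rcases ht with ⟨-, hch, hd, hq⟩ | ⟨-, hch, hd, hq⟩ | ⟨-, hch, hd, hq⟩ |
        ⟨h01, -⟩ | ⟨h01, -⟩
      · -- a, +1
        subst hch; subst hd; subst hq
        have e : (fun i : Fin k => ((x : ℤ) + (fun _ : Fin k => (1:ℤ)) i).toNat)
            = (fun _ : Fin k => x + 1) := by funext i; simp; try omega
        rw [e] at h'
        obtain ⟨n, m, y, hw, hv', h1, h2⟩ := ih (x + 1) q' v' h'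
        refine ⟨n + 1, m, y, ?_, hv', by omega, by omega⟩
        rw [hw]; rfl
      · -- b, -1, to state 1
        subst hch; subst hd; subst hq
        have hx : 1 ≤ x := by have := hn ⟨0, hk⟩; simp at this; omega
        have e : (fun i : Fin k => ((x : ℤ) + (fun _ : Fin k => (-1:ℤ)) i).toNat)
            = (fun _ : Fin k => x - 1) := by funext i; simp; try omega
        rw [e] at h'
        obtain ⟨m, y, hw, -, hv', h1, h2⟩ := v1_run1 hk w (x - 1) q' v' h'
        exact ⟨0, m + 1, y, by simp [hw, wa, List.replicate_succ], hv', by omega, by omega⟩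
      · -- b, 0, to state 1
        subst hch; subst hd; subst hq
        have e : (fun i : Fin k => ((x : ℤ) + (fun _ : Fin k => (0:ℤ)) i).toNat)
            = (fun _ : Fin k => x) := by funext i; simp
        rw [e] at h'
        obtain ⟨m, y, hw, -, hv', h1, h2⟩ := v1_run1 hk w x q' v' h'
        exact ⟨0, m + 1, y, by simp [hw, wa, List.replicate_succ], hv', by omega, by omega⟩
      · exact absurd h01 (by decide : ¬((0:Fin 2) = 1))
      · exact absurd h01 (by decide : ¬((0:Fin 2) = 1))

end Vone

section Vone2

variable {k : ℕ}

open ABC VASS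

lemma t1_a : ((0:Fin 2), a, fun _ => (1:ℤ), (0:Fin 2)) ∈ (V1 k).trans := by
  simp [V1]

lemma t1_bdec0 : ((0:Fin 2), b, fun _ => (-1:ℤ), (1:Fin 2)) ∈ (V1 k).trans := by
  simp [V1]

lemma t1_bz0 : ((0:Fin 2), b, fun _ => (0:ℤ), (1:Fin 2)) ∈ (V1 k).trans := by
  simp [V1]

lemma t1_bdec1 : ((1:Fin 2), b, fun _ => (-1:ℤ), (1:Fin 2)) ∈ (V1 k).trans := by
  simp [V1]

lemma t1_bz1 : ((1:Fin 2), b, fun _ => (0:ℤ), (1:Fin 2)) ∈ (V1 k).trans := by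
  simp [V1]

lemma runA1 : ∀ (t x : ℕ),
    (V1 k).Run (0, fun _ => x) (List.replicate t a) (0, fun _ => x + t) := by
  intro t
  induction t with
  | zero => intro x; exact Run.nil _
  | succ t ih =>
    intro x
    rw [List.replicate_succ]
    refine Run.cons t1_a (fun i => by show (0:ℤ) ≤ (x:ℤ) + 1; omega) ?_
    have e : (fun i : Fin k => ((x : ℤ) + (fun _ : Fin k => (1:ℤ)) i).toNat)
        = (fun _ : Fin k => x + 1) := by funext i; simp
    rw [e]
    simpa [show x + 1 + t = x + (t + 1) by omega] using ih (x + 1)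

lemma runB1dec : ∀ (t x : ℕ),
    (V1 k).Run (1, fun _ => x + t) (List.replicate t b) (1, fun _ => x) := by
  intro t
  induction t with
  | zero => intro x; exact Run.nil _
  | succ t ih =>
    intro x
    rw [List.replicate_succ]
    refine Run.cons t1_bdec1 (fun i => by simp; try omega) ?_
    have e : (fun i : Fin k => (((x + (t+1) : ℕ) : ℤ) + (fun _ : Fin k => (-1:ℤ)) i).toNat)
        = (fun _ : Fin k => x + t) := by funext i; simp; try omega
    rw [e]
    exact ih x

lemma runB1zero : ∀ (t : ℕ),
    (V1 k).Run (1, fun _ => 0) (List.replicate t b) (1, fun _ => 0) := by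
  intro t
  induction t with
  | zero => exact Run.nil _
  | succ t ih =>
    rw [List.replicate_succ]
    refine Run.cons t1_bz1 (fun i => by simp) ?_
    have e : (fun i : Fin k => (((0 : ℕ) : ℤ) + (fun _ : Fin k => (0:ℤ)) i).toNat)
        = (fun _ : Fin k => (0:ℕ)) := by funext i; simp
    rw [e]
    exact ih

lemma La_sub : La ⊆ (V1 k).LangReach := by
  rintro w ⟨n, m, hnm, rfl⟩
  cases m with
  | zero =>
    have hn0 : n = 0 := by omega
    subst hn0
    exact ⟨(0, fun _ => 0), Run.nil _, Set.mem_univ _, rfl⟩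
  | succ t =>
    have R1 : (V1 k).Run (0, fun _ => 0) (List.replicate n a) (0, fun _ => n) := by
      simpa using runA1 n 0
    cases n with
    | zero =>
      refine ⟨(1, fun _ => 0), ?_, Set.mem_univ _, rfl⟩
      have step : (V1 k).Run (0, fun _ => 0) [b] (1, fun _ => 0) := by
        refine Run.cons t1_bz0 (fun i => by simp) ?_
        have e : (fun i : Fin k => (((0 : ℕ) : ℤ) + (fun _ : Fin k => (0:ℤ)) i).toNat)
            = (fun _ : Fin k => (0:ℕ)) := by funext i; simp
        rw [e]; exact Run.nil _
      have : wa 0 (t+1) = [b] ++ List.replicate t b := by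
        simp [wa, List.replicate_succ]
      rw [this]
      exact step.append (runB1zero t)
    | succ x =>
      refine ⟨(1, fun _ => 0), ?_, Set.mem_univ _, rfl⟩
      have hxt : x ≤ t := by omega
      have step : (V1 k).Run (0, fun _ => x + 1) [b] (1, fun _ => x) := by
        refine Run.cons t1_bdec0 (fun i => by simp; try omega) ?_
        have e : (fun i : Fin k => (((x + 1 : ℕ) : ℤ) + (fun _ : Fin k => (-1:ℤ)) i).toNat)
            = (fun _ : Fin k => x) := by funext i; simp; try omega
        rw [e]; exact Run.nil _
      have Rdec : (V1 k).Run (1, fun _ => x) (List.replicate x b) (1, fun _ => 0) := by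
        simpa using runB1dec x 0
      have hw : wa (x+1) (t+1) = List.replicate (x+1) a
          ++ ([b] ++ (List.replicate x b ++ List.replicate (t - x) b)) := by
        simp [wa, List.replicate_succ]
        omega
      rw [hw]
      exact R1.append (step.append (Rdec.append (runB1zero (t - x))))

lemma langReach_V1 (hk : 0 < k) : (V1 k).LangReach = La := by
  apply Set.Subset.antisymm _ La_sub
  rintro w ⟨⟨q', v'⟩, hrun, -, h0⟩
  obtain ⟨n, m, y, hw, hv', h1, h2⟩ := v1_run0 hk w 0 q' v' hrun
  have hy : y = 0 := by
    have := congrFun (hv' ▸ h0) ⟨0, hk⟩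
    simpa using this
  exact ⟨n, m, by omega, hw⟩

end Vone2

section VoneHD

variable {k : ℕ}

open ABC VASS

lemma fin2_cases (q : Fin 2) : q = 0 ∨ q = 1 := by revert q; decide

noncomputable def r1 (k : ℕ) : (V1 k).Resolver := fun u ch =>
  match ch with
  | ABC.a => (fun _ => (1:ℤ), (0:Fin 2))
  | ABC.b => (if u.count ABC.b < u.count ABC.a then (fun _ => (-1:ℤ)) else (fun _ => (0:ℤ)),
      (1:Fin 2))
  | ABC.c => (fun _ => (0:ℤ), (0:Fin 2))

lemma wa_snoc (n j : ℕ) : wa n j ++ [b] = wa n (j+1) := by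
  simp [wa, List.replicate_succ', List.append_assoc]

lemma foldA : ∀ (t i : ℕ),
    (List.replicate t a).foldl ((V1 k).resStep (r1 k))
        (List.replicate i a, some ((0:Fin 2), fun _ => (i:ℕ)))
      = (List.replicate (i+t) a, some (0, fun _ => i + t)) := by
  intro t
  induction t with
  | zero => intro i; simp
  | succ t ih =>
    intro i
    rw [List.replicate_succ, List.foldl_cons]
    have estep : (V1 k).resStep (r1 k) (List.replicate i a, some ((0:Fin 2), fun _ => (i:ℕ))) a
        = (List.replicate (i+1) a, some (0, fun _ => i + 1)) := by
      simp only [resStep, Option.bind_some, r1]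
      split_ifs with hc
      on_goal 2 => exact absurd ⟨t1_a, fun j => by show (0:ℤ) ≤ (i:ℤ) + 1; omega⟩ hc
      refine Prod.ext ?_ ?_
      · show List.replicate i a ++ [a] = List.replicate (i+1) a
        rw [List.replicate_succ']
      · exact (if_pos hc).trans (congrArg some (Prod.ext rfl
          (funext fun j => by show ((i:ℤ) + 1).toNat = i + 1; omega)))
    rw [estep]
    simpa [show i + 1 + t = i + (t + 1) by omega] using ih (i+1)

lemma foldB : ∀ (t j : ℕ) (q : Fin 2) (n : ℕ), ∃ q' : Fin 2,
    (List.replicate t b).foldl ((V1 k).resStep (r1 k)) (wa n j, some (q, fun _ => n - j))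
      = (wa n (j+t), some (q', fun _ => n - (j+t))) := by
  intro t
  induction t with
  | zero => intro j q n; exact ⟨q, by simp⟩
  | succ t ih =>
    intro j q n
    rw [List.replicate_succ, List.foldl_cons]
    by_cases hlt : j < n
    · have estep : (V1 k).resStep (r1 k) (wa n j, some (q, fun _ => n - j)) b
          = (wa n (j+1), some (1, fun _ => n - (j+1))) := by
        simp only [resStep, Option.bind_some, r1, wa_count_a, wa_count_b]
        rw [if_pos hlt]
        have hmem : (q, b, (fun _ : Fin k => (-1:ℤ)), (1:Fin 2)) ∈ (V1 k).trans := by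
          rcases fin2_cases q with rfl | rfl
          · exact t1_bdec0
          · exact t1_bdec1
        simp only [if_pos (And.intro hmem fun (j' : Fin k) => by show (0:ℤ) ≤ ((n-j:ℕ):ℤ) + (-1); omega)]
        refine Prod.ext (wa_snoc n j) (congrArg some (Prod.ext rfl
          (funext fun j' => by show (((n-j:ℕ):ℤ) + (-1)).toNat = n - (j+1); omega)))
      rw [estep]
      obtain ⟨q', he⟩ := ih (j+1) 1 n
      refine ⟨q', ?_⟩
      rw [he]
      simp only [show j + 1 + t = j + (t + 1) by omega]
    · have estep : (V1 k).resStep (r1 k) (wa n j, some (q, fun _ => n - j)) b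
          = (wa n (j+1), some (1, fun _ => n - (j+1))) := by
        simp only [resStep, Option.bind_some, r1, wa_count_a, wa_count_b]
        rw [if_neg hlt]
        have hmem : (q, b, (fun _ : Fin k => (0:ℤ)), (1:Fin 2)) ∈ (V1 k).trans := by
          rcases fin2_cases q with rfl | rfl
          · exact t1_bz0
          · exact t1_bz1
        simp only [if_pos (And.intro hmem fun (j' : Fin k) => by show (0:ℤ) ≤ ((n-j:ℕ):ℤ) + 0; omega)]
        refine Prod.ext (wa_snoc n j) (congrArg some (Prod.ext rfl
          (funext fun j' => by show (((n-j:ℕ):ℤ) + 0).toNat = n - (j+1); omega)))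
      rw [estep]
      obtain ⟨q', he⟩ := ih (j+1) 1 n
      refine ⟨q', ?_⟩
      rw [he]
      simp only [show j + 1 + t = j + (t + 1) by omega]

lemma hd_V1 (hk : 0 < k) : (V1 k).HDReach := by
  refine ⟨r1 k, fun w hw => ?_⟩
  rw [langReach_V1 hk] at hw
  obtain ⟨n, m, hnm, rfl⟩ := hw
  have h1 : (List.replicate n a).foldl ((V1 k).resStep (r1 k)) ([], some (V1 k).initConf)
      = (List.replicate n a, some (0, fun _ => n)) := by
    simpa [VASS.initConf] using foldA n 0
  obtain ⟨q', he⟩ := foldB (k := k) m 0 0 n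
  rw [show wa n 0 = List.replicate n a by simp [wa]] at he
  refine ⟨(q', fun _ => 0), ?_, Set.mem_univ _, rfl⟩
  show ((wa n m).foldl ((V1 k).resStep (r1 k)) ([], some (V1 k).initConf)).2 = _
  rw [wa, List.foldl_append, h1]
  rw [show (fun _ : Fin k => n) = (fun _ : Fin k => n - 0) from rfl] at *
  rw [he]
  show some (q', fun _ => n - (0 + m)) = some (q', fun _ => 0)
  exact congrArg some (Prod.ext rfl (funext fun j => by show n - (0+m) = 0; omega))

end VoneHD

section Vtwo

variable {k : ℕ}

open ABC VASS

lemma t2_a1 : ((0:Fin 2), a, fun _ => (1:ℤ), (0:Fin 2)) ∈ (V2 k).trans := by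
  simp [V2]

lemma t2_a0 : ((0:Fin 2), a, fun _ => (0:ℤ), (0:Fin 2)) ∈ (V2 k).trans := by
  simp [V2]

lemma t2_b0 : ((0:Fin 2), b, fun _ => (-1:ℤ), (1:Fin 2)) ∈ (V2 k).trans := by
  simp [V2]

lemma t2_b1 : ((1:Fin 2), b, fun _ => (-1:ℤ), (1:Fin 2)) ∈ (V2 k).trans := by
  simp [V2]

lemma v2_run1 (hk : 0 < k) : ∀ (w : List ABC) (x : ℕ) (q' : Fin 2) (v' : Fin k → ℕ),
    (V2 k).Run (1, fun _ => x) w (q', v') →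
    ∃ m y, w = List.replicate m ABC.b ∧ v' = (fun _ => y) ∧ y + m = x := by
  intro w
  induction w with
  | nil =>
    intro x q' v' h
    cases h
    exact ⟨0, x, rfl, rfl, rfl⟩
  | cons ch w ih =>
    intro x q' v' h
    cases h with
    | @cons _ _ _ d q₂ _ _ ht hn h' =>
      simp only [V2, Set.mem_insert_iff, Set.mem_singleton_iff, Prod.mk.injEq] at ht
      rcases ht with ⟨h01, -⟩ | ⟨h01, -⟩ | ⟨h01, -⟩ | ⟨-, hch, hd, hq⟩
      · exact absurd h01 (by decide : ¬((1:Fin 2) = 0))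
      · exact absurd h01 (by decide : ¬((1:Fin 2) = 0))
      · exact absurd h01 (by decide : ¬((1:Fin 2) = 0))
      · subst hch; subst hd; subst hq
        have hx : 1 ≤ x := by have := hn ⟨0, hk⟩; simp at this; omega
        have e : (fun i : Fin k => ((x : ℤ) + (fun _ : Fin k => (-1:ℤ)) i).toNat)
            = (fun _ : Fin k => x - 1) := by funext i; simp; try omega
        rw [e] at h'
        obtain ⟨m, y, hw, hv', h1⟩ := ih (x - 1) q' v' h'
        exact ⟨m + 1, y, by rw [hw, List.replicate_succ], hv', by omega⟩

lemma v2_run0 (hk : 0 < k) : ∀ (w : List ABC) (x : ℕ) (q' : Fin 2) (v' : Fin k → ℕ),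
    (V2 k).Run (0, fun _ => x) w (q', v') →
    ∃ n m y, w = wa n m ∧ v' = (fun _ => y) ∧ x ≤ y + m ∧ y + m ≤ x + n := by
  intro w
  induction w with
  | nil =>
    intro x q' v' h
    cases h
    exact ⟨0, 0, x, rfl, rfl, by omega, by omega⟩
  | cons ch w ih =>
    intro x q' v' h
    cases h with
    | @cons _ _ _ d q₂ _ _ ht hn h' =>
      simp only [V2, Set.mem_insert_iff, Set.mem_singleton_iff, Prod.mk.injEq] at ht
      rcases ht with ⟨-, hch, hd, hq⟩ | ⟨-, hch, hd, hq⟩ | ⟨-, hch, hd, hq⟩ | ⟨h01, -⟩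
      · -- a, +1
        subst hch; subst hd; subst hq
        have e : (fun i : Fin k => ((x : ℤ) + (fun _ : Fin k => (1:ℤ)) i).toNat)
            = (fun _ : Fin k => x + 1) := by funext i; simp; try omega
        rw [e] at h'
        obtain ⟨n, m, y, hw, hv', h1, h2⟩ := ih (x + 1) q' v' h'
        refine ⟨n + 1, m, y, ?_, hv', by omega, by omega⟩
        rw [hw]; rfl
      · -- a, 0
        subst hch; subst hd; subst hq
        have e : (fun i : Fin k => ((x : ℤ) + (fun _ : Fin k => (0:ℤ)) i).toNat)
            = (fun _ : Fin k => x) := by funext i; simp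
        rw [e] at h'
        obtain ⟨n, m, y, hw, hv', h1, h2⟩ := ih x q' v' h'
        refine ⟨n + 1, m, y, ?_, hv', by omega, by omega⟩
        rw [hw]; rfl
      · -- b, -1
        subst hch; subst hd; subst hq
        have hx : 1 ≤ x := by have := hn ⟨0, hk⟩; simp at this; omega
        have e : (fun i : Fin k => ((x : ℤ) + (fun _ : Fin k => (-1:ℤ)) i).toNat)
            = (fun _ : Fin k => x - 1) := by funext i; simp; try omega
        rw [e] at h'
        obtain ⟨m, y, hw, hv', h1⟩ := v2_run1 hk w (x - 1) q' v' h'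
        exact ⟨0, m + 1, y, by simp [hw, wa, List.replicate_succ], hv', by omega, by omega⟩
      · exact absurd h01 (by decide : ¬((0:Fin 2) = 1))

lemma runA2inc : ∀ (t x : ℕ),
    (V2 k).Run (0, fun _ => x) (List.replicate t a) (0, fun _ => x + t) := by
  intro t
  induction t with
  | zero => intro x; exact Run.nil _
  | succ t ih =>
    intro x
    rw [List.replicate_succ]
    refine Run.cons t2_a1 (fun i => by show (0:ℤ) ≤ (x:ℤ) + 1; omega) ?_
    have e : (fun i : Fin k => ((x : ℤ) + (fun _ : Fin k => (1:ℤ)) i).toNat)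
        = (fun _ : Fin k => x + 1) := by funext i; simp
    rw [e]
    simpa [show x + 1 + t = x + (t + 1) by omega] using ih (x + 1)

lemma runA2zero : ∀ (t x : ℕ),
    (V2 k).Run (0, fun _ => x) (List.replicate t a) (0, fun _ => x) := by
  intro t
  induction t with
  | zero => intro x; exact Run.nil _
  | succ t ih =>
    intro x
    rw [List.replicate_succ]
    refine Run.cons t2_a0 (fun i => by show (0:ℤ) ≤ (x:ℤ) + 0; omega) ?_
    have e : (fun i : Fin k => ((x : ℤ) + (fun _ : Fin k => (0:ℤ)) i).toNat)
        = (fun _ : Fin k => x) := by funext i; simp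
    rw [e]
    exact ih x

lemma runB2 : ∀ (t : ℕ),
    (V2 k).Run (1, fun _ => t) (List.replicate t b) (1, fun _ => 0) := by
  intro t
  induction t with
  | zero => exact Run.nil _
  | succ t ih =>
    rw [List.replicate_succ]
    refine Run.cons t2_b1 (fun i => by show (0:ℤ) ≤ ((t+1:ℕ):ℤ) + (-1); omega) ?_
    have e : (fun i : Fin k => (((t + 1:ℕ) : ℤ) + (fun _ : Fin k => (-1:ℤ)) i).toNat)
        = (fun _ : Fin k => t) := by funext i; simp
    rw [e]
    exact ih

lemma langReach_V2 (hk : 0 < k) : (V2 k).LangReach = Lb := by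
  apply Set.Subset.antisymm
  · rintro w ⟨⟨q', v'⟩, hrun, -, h0⟩
    obtain ⟨n, m, y, hw, hv', h1, h2⟩ := v2_run0 hk w 0 q' v' hrun
    have hy : y = 0 := by
      have := congrFun (hv' ▸ h0) ⟨0, hk⟩
      simpa using this
    exact ⟨n, m, by omega, hw⟩
  · rintro w ⟨n, m, hmn, rfl⟩
    cases m with
    | zero =>
      refine ⟨(0, fun _ => 0), ?_, Set.mem_univ _, rfl⟩
      have : wa n 0 = List.replicate n a := by simp [wa]
      rw [this]
      exact runA2zero n 0
    | succ t =>
      refine ⟨(1, fun _ => 0), ?_, Set.mem_univ _, rfl⟩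
      have hsplit : wa n (t+1) = (List.replicate (t+1) a ++ List.replicate (n - (t+1)) a)
          ++ ([b] ++ List.replicate t b) := by
        have h1 : List.replicate n a = List.replicate (t+1) a ++ List.replicate (n-(t+1)) a := by
          rw [← List.replicate_add]; congr 1; omega
        have h2 : List.replicate (t+1) b = [b] ++ List.replicate t b := by
          rw [List.replicate_succ]; rfl
        show List.replicate n a ++ List.replicate (t+1) b = _
        rw [h1, h2]
      rw [hsplit]
      have R1 : (V2 k).Run (0, fun _ => 0) (List.replicate (t+1) a) (0, fun _ => t+1) := by
        simpa using runA2inc (t+1) 0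
      have R2 : (V2 k).Run (0, fun _ => t+1) (List.replicate (n - (t+1)) a)
          (0, fun _ => t+1) := runA2zero _ _
      have R3 : (V2 k).Run (0, fun _ => t+1) [b] (1, fun _ => t) := by
        refine Run.cons t2_b0 (fun i => by show (0:ℤ) ≤ ((t+1:ℕ):ℤ) + (-1); omega) ?_
        have e : (fun i : Fin k => (((t+1:ℕ) : ℤ) + (fun _ : Fin k => (-1:ℤ)) i).toNat)
            = (fun _ : Fin k => t) := by funext i; simp
        rw [e]
        exact Run.nil _
      exact (R1.append R2).append (R3.append (runB2 t))

end Vtwo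

section Neg

open VASS

lemma La_not_detR {k : ℕ} (hk : 0 < k) : La ∉ DetR k := by
  rintro ⟨V, hdet, hL⟩
  have hmem : ∀ n m : ℕ, n ≤ m →
      ∃ c, V.Run V.initConf (wa n m) c ∧ c.1 ∈ V.acc ∧ c.2 = fun _ => 0 := by
    intro n m h
    have : wa n m ∈ V.LangReach := by rw [hL]; exact mem_La.mpr h
    exact this
  have hpre : ∀ n : ℕ, ∃ c, V.Run V.initConf (List.replicate n ABC.a) c := by
    intro n
    obtain ⟨c, hc, -⟩ := hmem n n le_rfl
    obtain ⟨c', h1, -⟩ := Run.split (w₁ := List.replicate n ABC.a) hc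
    exact ⟨c', h1⟩
  choose f hf using hpre
  obtain ⟨q, hq⟩ := Finite.exists_infinite_fiber (fun n => (f n).1)
  set p : ℕ → Prop := fun n => (f n).1 = q with hp
  have hpinf : (setOf p).Infinite := Set.infinite_coe_iff.mp hq
  have hpwo : ∀ g : ℕ → (Fin k → ℕ), (∀ n, g n ∈ (Set.univ : Set (Fin k → ℕ))) →
      ∃ m n, m < n ∧ g m ≤ g n := fun g _ => wellQuasiOrdered_le g
  obtain ⟨i, j, hij, hle⟩ := hpwo (fun t => (f (Nat.nth p t)).2) (fun _ => Set.mem_univ _)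
  set n1 := Nat.nth p i with hn1
  set n2 := Nat.nth p j with hn2
  have hn12 : n1 < n2 := Nat.nth_strictMono hpinf hij
  have hstate : (f n1).1 = (f n2).1 := by
    have h1 : p n1 := Nat.nth_mem_of_infinite hpinf i
    have h2 : p n2 := Nat.nth_mem_of_infinite hpinf j
    rw [h1, h2]
  -- a^{n1} b^{n2} is accepted
  obtain ⟨c, hcrun, hacc, hzero⟩ := hmem n1 n2 (le_of_lt hn12)
  obtain ⟨cmid, hA, hB⟩ := Run.split (w₁ := List.replicate n1 ABC.a) hcrun
  have hcmid : cmid = f n1 := run_unique hdet hA (hf n1)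
  rw [hcmid] at hB
  -- shift it up to the counters of f n2
  set t : Fin k → ℕ := fun i0 => (f n2).2 i0 - (f n1).2 i0 with hts
  have hle' : ∀ i0, (f n1).2 i0 ≤ (f n2).2 i0 := fun i0 => by
    simpa [hn1, hn2] using hle i0
  have ht : ∀ i0, (f n1).2 i0 + t i0 = (f n2).2 i0 := by
    intro i0
    have := hle' i0
    simp only [hts]
    omega
  have hshift := Run.shift t hB
  have hstart : ((f n1).1, fun i0 => (f n1).2 i0 + t i0) = f n2 :=
    Prod.ext hstate (funext ht)
  rw [hstart] at hshift
  -- a^{n2} b^{n2} is accepted, and determinism forces t = 0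
  obtain ⟨c2, hc2run, hacc2, hzero2⟩ := hmem n2 n2 le_rfl
  obtain ⟨cmid2, hA2, hB2⟩ := Run.split (w₁ := List.replicate n2 ABC.a) hc2run
  have hcmid2 : cmid2 = f n2 := run_unique hdet hA2 (hf n2)
  rw [hcmid2] at hB2
  have hend := run_unique hdet hshift hB2
  have ht0 : ∀ i0, t i0 = 0 := by
    intro i0
    have h1 := congrFun (congrArg Prod.snd hend) i0
    have h2 := congrFun hzero2 i0
    have h3 := congrFun hzero i0
    simp only at h1 h2 h3
    omega
  have hfeq : f n1 = f n2 :=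
    Prod.ext hstate (funext fun i0 => by have := ht i0; have := ht0 i0; omega)
  -- transplant the accepting run of a^{n1} b^{n1} after a^{n2}
  obtain ⟨c1, hc1run, hacc1, hzero1⟩ := hmem n1 n1 le_rfl
  obtain ⟨cmid1, hA1, hB1⟩ := Run.split (w₁ := List.replicate n1 ABC.a) hc1run
  have hcmid1 : cmid1 = f n1 := run_unique hdet hA1 (hf n1)
  rw [hcmid1] at hB1
  have hrun2 : V.Run V.initConf (wa n2 n1) c1 :=
    (hf n2).append (by rw [← hfeq]; exact hB1)
  have hmem2 : wa n2 n1 ∈ La := by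
    rw [← hL]; exact ⟨c1, hrun2, hacc1, hzero1⟩
  have := mem_La.mp hmem2
  omega

lemma Lb_not_hdR {k : ℕ} (hk : 0 < k) : Lb ∉ HDR k := by
  rintro ⟨V, ⟨r, hr⟩, hL⟩
  have han : ∀ n : ℕ, ∃ q : Fin V.n,
      V.resRun r (List.replicate n ABC.a) = some (q, fun _ => 0) := by
    intro n
    have hmem : List.replicate n ABC.a ∈ V.LangReach := by
      rw [hL]; exact ⟨n, 0, by omega, by simp [wa]⟩
    obtain ⟨c, hres, -, h0⟩ := hr _ hmem
    exact ⟨c.1, by rw [hres, ← h0]⟩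
  choose g hg using han
  have key : ∀ n1 n2 : ℕ, n1 < n2 → g n1 = g n2 → False := by
    intro n1 n2 hlt hgq
    have hmem2 : wa n2 n2 ∈ V.LangReach := by rw [hL]; exact mem_Lb.mpr le_rfl
    obtain ⟨c, hres, hacc, h0⟩ := hr _ hmem2
    have hseg : V.Run (g n2, fun _ => 0) (List.replicate n2 ABC.b) c :=
      resRun_segment r (hg n2) hres
    have hpre1 : V.Run V.initConf (List.replicate n1 ABC.a) (g n1, fun _ => 0) :=
      resRun_run r (hg n1)
    have hrun : V.Run V.initConf (wa n1 n2) c :=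
      hpre1.append (by rw [hgq]; exact hseg)
    have hmem3 : wa n1 n2 ∈ Lb := by rw [← hL]; exact ⟨c, hrun, hacc, h0⟩
    have := mem_Lb.mp hmem3
    omega
  obtain ⟨i, j, hne, he⟩ := Finite.exists_ne_map_eq_of_infinite g
  rcases lt_or_gt_of_ne hne with h | h
  · exact key i j h he
  · exact key j i h he.symm

end Neg

/-- For every `k ≥ 1`, deterministic ⊊ history-deterministic ⊊ nondeterministic
for `k`-VASS languages under reachability acceptance. -/
theorem stmt15 : ∀ k : ℕ, 1 ≤ k → DetR k ⊂ HDR k ∧ HDR k ⊂ NR k := by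
  intro k hk
  have hk' : 0 < k := hk
  constructor
  · have hsub : DetR k ⊆ HDR k := by
      rintro L ⟨V, hdet, hL⟩
      exact ⟨V, VASS.det_hdReach hdet, hL⟩
    exact (Set.ssubset_iff_of_subset hsub).mpr
      ⟨La, ⟨V1 k, hd_V1 hk', langReach_V1 hk'⟩, La_not_detR hk'⟩
  · have hsub : HDR k ⊆ NR k := by
      rintro L ⟨V, -, hL⟩
      exact ⟨V, hL⟩
    exact (Set.ssubset_iff_of_subset hsub).mpr
      ⟨Lb, ⟨V2 k, langReach_V2 hk'⟩, Lb_not_hdR hk'⟩
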